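/- For each k ∈ {1,2} let Ψ > 0, η > 0, τ_k > 0, t_k > 0 (t_k = |θ|²|g_k|²), α_c > 0, α_k > 0, γ̄_c > 0, γ̄_k > 0, γ̄_b > 0, and set ρ_{c,k} = (α_c − γ̄_c α_k)/γ̄_c, ρ_k = α_k/γ̄_k, γ_{k,c}(δ) = α_c Ψ τ_k/(α_k Ψ τ_k + ηδΨ t_k + 1), γ_{k,k}(δ) = α_k Ψ τ_k/(ηδΨ t_k + 1), γ_{k,b}(δ) = ηδΨ t_k. Define δ_low = max_{k∈{1,2}} γ̄_b/(ηΨ t_k) and δ_up = min_{k∈{1,2}} min{(ρ_{c,k}Ψτ_k − 1)/(ηΨ t_k), (ρ_kΨτ_k − 1)/(ηΨ t_k)}. Then there exists δ with 0 < δ ≤ 1 such that for both k ∈ {1,2} simultaneously γ_{k,c}(δ) > γ̄_c, γ_{k,k}(δ) > γ̄_k, and γ_{k,b}(δ) > γ̄_b, if and only if δ_low < min{1, δ_up}. -/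

import Mathlib

/-!
Each decoding condition is linear in `δ` after clearing a positive denominator: the backscatter
condition says `δ` exceeds `γ̄_b / (ηΨ t_k)`, and the common and private SINR conditions say `δ`
stays below the corresponding upper thresholds. A feasible `δ ∈ (0, 1]` therefore exists iff
the largest lower bound (which is positive) lies below `1` and every upper bound.
-/

theorem exists_Ioc_between_iff {α : Type*} [LinearOrder α] [DenselyOrdered α]
    {lo hi a c : α} (ha : lo ≤ a) :
    (∃ δ, lo < δ ∧ δ ≤ hi ∧ a < δ ∧ δ < c) ↔ a < min hi c := by
  constructor
  · rintro ⟨δ, -, hδhi, haδ, hδc⟩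
    exact lt_min (haδ.trans_le hδhi) (haδ.trans hδc)
  · intro h
    obtain ⟨δ, haδ, hδ⟩ := exists_between h
    exact ⟨δ, ha.trans_lt haδ, (hδ.trans_le (min_le_left _ _)).le, haδ,
      hδ.trans_le (min_le_right _ _)⟩

section Decoding

variable {Ψ η αc γc γb τ t α γk δ : ℝ}

theorem backscatter_decodable_iff (hd : 0 < η * Ψ * t) :
    η * δ * Ψ * t > γb ↔ γb / (η * Ψ * t) < δ := by
  rw [div_lt_iff₀ hd]
  constructor <;> intro h <;> linarith

theorem private_decodable_iff (hd : 0 < η * Ψ * t) (hγk : 0 < γk)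
    (hD : 0 < η * δ * Ψ * t + 1) :
    α * Ψ * τ / (η * δ * Ψ * t + 1) > γk ↔ δ < ((α / γk) * Ψ * τ - 1) / (η * Ψ * t) := by
  rw [gt_iff_lt, lt_div_iff₀ hD, lt_div_iff₀ hd, lt_sub_iff_add_lt, div_mul_eq_mul_div,
    div_mul_eq_mul_div, lt_div_iff₀ hγk]
  constructor <;> intro h <;> linarith

theorem common_decodable_iff (hd : 0 < η * Ψ * t) (hγc : 0 < γc)
    (hD : 0 < α * Ψ * τ + η * δ * Ψ * t + 1) :
    αc * Ψ * τ / (α * Ψ * τ + η * δ * Ψ * t + 1) > γc ↔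
      δ < (((αc - γc * α) / γc) * Ψ * τ - 1) / (η * Ψ * t) := by
  rw [gt_iff_lt, lt_div_iff₀ hD, lt_div_iff₀ hd, lt_sub_iff_add_lt, div_mul_eq_mul_div,
    div_mul_eq_mul_div, lt_div_iff₀ hγc]
  constructor <;> intro h <;> linarith

theorem user_decodable_iff (hΨ : 0 < Ψ) (hη : 0 < η) (hγc : 0 < γc) (hτ : 0 < τ) (ht : 0 < t)
    (hα : 0 < α) (hγk : 0 < γk) (hδ : 0 < δ) :
    (αc * Ψ * τ / (α * Ψ * τ + η * δ * Ψ * t + 1) > γc ∧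
      α * Ψ * τ / (η * δ * Ψ * t + 1) > γk ∧ η * δ * Ψ * t > γb) ↔
    (γb / (η * Ψ * t) < δ ∧ δ < (((αc - γc * α) / γc) * Ψ * τ - 1) / (η * Ψ * t) ∧
      δ < ((α / γk) * Ψ * τ - 1) / (η * Ψ * t)) := by
  have hd : 0 < η * Ψ * t := by positivity
  rw [common_decodable_iff hd hγc (by positivity), private_decodable_iff hd hγk (by positivity),
    backscatter_decodable_iff hd]
  tauto

end Decoding

theorem reflection_coefficient_feasibility_general (Ψ η αc γc γb : ℝ)
    (τ t α γk : Fin 2 → ℝ)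
    (hΨ : 0 < Ψ) (hη : 0 < η) (hγc : 0 < γc) (hγb : 0 < γb)
    (hτ : ∀ k, 0 < τ k) (ht : ∀ k, 0 < t k) (hα : ∀ k, 0 < α k)
    (hγk : ∀ k, 0 < γk k) :
    (∃ δ : ℝ, 0 < δ ∧ δ ≤ 1 ∧ ∀ k : Fin 2,
        αc * Ψ * τ k / (α k * Ψ * τ k + η * δ * Ψ * t k + 1) > γc ∧
        α k * Ψ * τ k / (η * δ * Ψ * t k + 1) > γk k ∧
        η * δ * Ψ * t k > γb) ↔
      max (γb / (η * Ψ * t 0)) (γb / (η * Ψ * t 1)) <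
        min 1
          (min
            (min ((((αc - γc * α 0) / γc) * Ψ * τ 0 - 1) / (η * Ψ * t 0))
              (((α 0 / γk 0) * Ψ * τ 0 - 1) / (η * Ψ * t 0)))
            (min ((((αc - γc * α 1) / γc) * Ψ * τ 1 - 1) / (η * Ψ * t 1))
              (((α 1 / γk 1) * Ψ * τ 1 - 1) / (η * Ψ * t 1)))) := by
  have hlow : 0 ≤ max (γb / (η * Ψ * t 0)) (γb / (η * Ψ * t 1)) :=
    le_max_of_le_left (by have := ht 0; positivity)
  rw [← exists_Ioc_between_iff hlow]
  refine exists_congr fun δ => and_congr_right fun hδ => and_congr_right fun _ => ?_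
  simp only [user_decodable_iff hΨ hη hγc (hτ _) (ht _) (hα _) (hγk _) hδ, Fin.forall_fin_two,
    max_lt_iff, lt_min_iff]
  tauto

/-- Feasibility of the reflection coefficient (eq. (14)): there exists
`δ ∈ (0,1]` such that both users simultaneously decode the common stream, their
private stream, and the backscatter symbol, iff `δ_low < min{1, δ_up}`, where
`δ_low = max_k γ̄_b/(ηΨ t_k)` and
`δ_up = min_k min{(ρ_{c,k}Ψτ_k − 1)/(ηΨ t_k), (ρ_kΨτ_k − 1)/(ηΨ t_k)}`. -/
theorem reflection_coefficient_feasibility (Ψ η αc γc γb : ℝ)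
    (τ t α γk : Fin 2 → ℝ)
    (hΨ : 0 < Ψ) (hη : 0 < η) (hαc : 0 < αc) (hγc : 0 < γc) (hγb : 0 < γb)
    (hτ : ∀ k, 0 < τ k) (ht : ∀ k, 0 < t k) (hα : ∀ k, 0 < α k)
    (hγk : ∀ k, 0 < γk k) :
    (∃ δ : ℝ, 0 < δ ∧ δ ≤ 1 ∧ ∀ k : Fin 2,
        αc * Ψ * τ k / (α k * Ψ * τ k + η * δ * Ψ * t k + 1) > γc ∧
        α k * Ψ * τ k / (η * δ * Ψ * t k + 1) > γk k ∧
        η * δ * Ψ * t k > γb) ↔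
      max (γb / (η * Ψ * t 0)) (γb / (η * Ψ * t 1)) <
        min 1
          (min
            (min ((((αc - γc * α 0) / γc) * Ψ * τ 0 - 1) / (η * Ψ * t 0))
              (((α 0 / γk 0) * Ψ * τ 0 - 1) / (η * Ψ * t 0)))
            (min ((((αc - γc * α 1) / γc) * Ψ * τ 1 - 1) / (η * Ψ * t 1))
              (((α 1 / γk 1) * Ψ * τ 1 - 1) / (η * Ψ * t 1)))) :=
  reflection_coefficient_feasibility_general Ψ η αc γc γb τ t α γk hΨ hη hγc hγb hτ ht hα hγk
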